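/- For every integer p ≥ 1, Θ_p equals the set of all vectors of the form (2^{t_1}/M, 2^{t_2}/M, …, 2^{t_{r−1}}/M, 1/M, 0, …, 0), where 1 ≤ r ≤ p, t_1 > t_2 > ⋯ > t_{r−1} > 0 are integers, M = 2^{t_1} + 2^{t_2} + ⋯ + 2^{t_{r−1}} + 1 (an odd integer), and the vector is padded with p − r trailing zeros. -/

import Mathlib

/-!
Along a witness sequence, the ratio of the coordinates `i ≤ j` is `2 ^ (n_i - n_j)`. Powers of two
are uniformly discrete, so when `θ_j > 0` the gap `n_i - n_j` is eventually constant. As `θ` is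
antitone, its positive coordinates form an initial block; they are `2 ^ t_i` times the last one,
and `∑ θ = 1` fixes the scale. Conversely, shifting the top `r` exponents by `k → ∞` while keeping
the others bounded realises every such vector.
-/

open Filter Topology

/-- Membership in the set `Θ_p`: there is an infinite collection of integers
`N = 2^{n_1} + ⋯ + 2^{n_p}` with `n_1 > ⋯ > n_p ≥ 0` along which `2^{n_i}/N → θ i`
for each `i`. -/
def MemTheta {p : ℕ} (θ : Fin p → ℝ) : Prop :=
  ∃ m : ℕ → Fin p → ℕ,
    (∀ k, StrictAnti (m k)) ∧
    Tendsto (fun k => ∑ i : Fin p, 2 ^ (m k i)) atTop atTop ∧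
    ∀ i : Fin p,
      Tendsto (fun k => (2 : ℝ) ^ (m k i) / ∑ j : Fin p, (2 : ℝ) ^ (m k j)) atTop (𝓝 (θ i))

/-- The function `H(θ; s) = ∑_k θ_k^s (2(2^s − 1) ∑_{j>k} θ_j + θ_k)`. -/
noncomputable def Hfun {p : ℕ} (θ : Fin p → ℝ) (s : ℝ) : ℝ :=
  ∑ k : Fin p,
    θ k ^ s * (2 * ((2 : ℝ) ^ s - 1) * (∑ j ∈ Finset.univ.filter (fun j => k < j), θ j) + θ k)

theorem exists_eventually_eq_of_tendsto_comp {α β γ : Type*} [TopologicalSpace α]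
    [DiscreteTopology α] [TopologicalSpace β] {g : α → β} (hg : IsClosedEmbedding g)
    {l : Filter γ} [l.NeBot] {f : γ → α} {c : β} (h : Tendsto (g ∘ f) l (𝓝 c)) :
    ∃ a, (∀ᶠ x in l, f x = a) ∧ c = g a := by
  have hc : c ∈ Set.range g := hg.isClosed_range.closure_eq ▸
    mem_closure_of_tendsto h (Eventually.of_forall fun x => Set.mem_range_self (f x))
  obtain ⟨a, rfl⟩ := hc
  refine ⟨a, ?_, rfl⟩
  rwa [← hg.tendsto_nhds_iff, nhds_discrete, tendsto_pure] at h

theorem isClosedEmbedding_two_pow : IsClosedEmbedding fun n : ℕ => (2 : ℝ) ^ n :=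
  Metric.isClosedEmbedding_of_pairwise_le_dist zero_lt_one fun m n hmn => by
    have : 1 ≤ dist (2 ^ m) (2 ^ n) :=
      Nat.pairwise_one_le_dist ((Nat.pow_right_injective le_rfl).ne hmn)
    rwa [← Nat.dist_cast_real, Nat.cast_pow, Nat.cast_pow, Nat.cast_ofNat] at this

theorem Fin.lt_card_filter_iff_of_antitone {p : ℕ} {P : Fin p → Prop} [DecidablePred P]
    (hP : Antitone P) (i : Fin p) : (i : ℕ) < (Finset.univ.filter P).card ↔ P i := by
  constructor
  · intro hi
    by_contra hni
    have hsub : Finset.univ.filter P ⊆ Finset.Iio i := fun j hj => by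
      rw [Finset.mem_Iio]
      by_contra hij
      exact hni (hP (not_lt.mp hij) (Finset.mem_filter.mp hj).2)
    have := Finset.card_le_card hsub
    rw [Fin.card_Iio] at this
    omega
  · intro hi
    have hsub : Finset.Iic i ⊆ Finset.univ.filter P := fun j hj =>
      Finset.mem_filter.mpr ⟨Finset.mem_univ j, hP (Finset.mem_Iic.mp hj) hi⟩
    have := Finset.card_le_card hsub
    rw [Fin.card_Iic] at this
    omega

theorem tendsto_div_sum_of_tendsto_div {ι κ : Type*} [Fintype ι] {l : Filter κ}
    {a : κ → ι → ℝ} {s : κ → ℝ} {w : ι → ℝ} (hs : ∀ k, s k ≠ 0)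
    (h : ∀ i, Tendsto (fun k => a k i / s k) l (𝓝 (w i))) (hw : ∑ i, w i ≠ 0) (i : ι) :
    Tendsto (fun k => a k i / ∑ j, a k j) l (𝓝 (w i / ∑ j, w j)) := by
  have hscale : (fun k => a k i / ∑ j, a k j) = fun k => (a k i / s k) / ∑ j, a k j / s k := by
    funext k
    rw [← Finset.sum_div, div_div_div_cancel_right₀ (hs k)]
  rw [hscale]
  exact (h i).div (tendsto_finsetSum _ fun j _ => h j) hw

noncomputable def thetaWeight (r : ℕ) (t : Fin (r - 1) → ℕ) (n : ℕ) : ℝ :=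
  if h : n < r - 1 then 2 ^ t ⟨n, h⟩ else if n = r - 1 then 1 else 0

section thetaWeight

variable {r : ℕ} {t : Fin (r - 1) → ℕ}

theorem sum_thetaWeight {p : ℕ} (hr : 1 ≤ r) (hrp : r ≤ p) :
    ∑ i : Fin p, thetaWeight r t i = ∑ j, (2 : ℝ) ^ t j + 1 := by
  have htail : ∑ n ∈ Finset.Ico r p, thetaWeight r t n = 0 :=
    Finset.sum_eq_zero fun n hn => by
      rw [Finset.mem_Ico] at hn
      rw [thetaWeight, dif_neg (by omega), if_neg (by omega)]
  have hhead : ∑ n ∈ Finset.range (r - 1), thetaWeight r t n = ∑ j, (2 : ℝ) ^ t j := by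
    rw [← Fin.sum_univ_eq_sum_range]
    exact Finset.sum_congr rfl fun j _ => dif_pos j.isLt
  rw [Fin.sum_univ_eq_sum_range (thetaWeight r t), ← Finset.sum_range_add_sum_Ico _ hrp, htail,
    add_zero, show Finset.range r = Finset.range (r - 1 + 1) by rw [Nat.sub_add_cancel hr],
    Finset.sum_range_succ, hhead, thetaWeight, dif_neg (lt_irrefl _), if_pos rfl]

theorem thetaWeight_div (M : ℝ) (n : ℕ) : thetaWeight r t n / M =
    if h : n < r - 1 then (2 : ℝ) ^ t ⟨n, h⟩ / M else if n = r - 1 then 1 / M else 0 := by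
  unfold thetaWeight
  split_ifs <;> simp

-- The offset `p` keeps the growing top block above the bounded tail `p - 1 - n`.
def thetaExponent (p r : ℕ) (t : Fin (r - 1) → ℕ) (k n : ℕ) : ℕ :=
  if h : n < r - 1 then t ⟨n, h⟩ + k + p else if n = r - 1 then k + p else p - 1 - n

theorem thetaExponent_strictAnti {p : ℕ} (ht : StrictAnti t)
    (htpos : ∀ i, 0 < t i) (k : ℕ) : StrictAnti fun i : Fin p => thetaExponent p r t k i := by
  intro i j hij
  have hij : (i : ℕ) < j := hij
  have hj := j.isLt
  simp only [thetaExponent]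
  split_ifs with hj₁ hi₁ _ _ hi₂ <;> try omega
  · exact Nat.add_lt_add_right (Nat.add_lt_add_right (ht hij) k) p
  · have := htpos ⟨i, hi₂⟩
    omega

theorem tendsto_two_pow_thetaExponent_div (p n : ℕ) :
    Tendsto (fun k => (2 : ℝ) ^ thetaExponent p r t k n / 2 ^ (k + p)) atTop
      (𝓝 (thetaWeight r t n)) := by
  simp only [thetaExponent, thetaWeight]
  split_ifs
  · refine tendsto_const_nhds.congr fun k => ?_
    rw [add_assoc, pow_add, mul_div_cancel_right₀ _ (by positivity)]
  · refine tendsto_const_nhds.congr fun k => ?_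
    rw [div_self (by positivity)]
  · exact tendsto_const_nhds.div_atTop <|
      (tendsto_pow_atTop_atTop_of_one_lt one_lt_two).comp (tendsto_add_atTop_nat p)

end thetaWeight

theorem memTheta_thetaWeight_div {p r : ℕ} (hr : 1 ≤ r) (hrp : r ≤ p) {t : Fin (r - 1) → ℕ}
    (ht : StrictAnti t) (htpos : ∀ i, 0 < t i) :
    MemTheta fun i : Fin p => thetaWeight r t i / ∑ j : Fin p, thetaWeight r t j := by
  refine ⟨fun k i => thetaExponent p r t k i, thetaExponent_strictAnti ht htpos, ?_,
    tendsto_div_sum_of_tendsto_div (fun k => by positivity)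
      (fun i => tendsto_two_pow_thetaExponent_div p i) ?_⟩
  · refine tendsto_atTop_mono (fun k => ?_) tendsto_id
    have hlast : thetaExponent p r t k (r - 1) = k + p := by
      rw [thetaExponent, dif_neg (lt_irrefl _), if_pos rfl]
    calc k ≤ 2 ^ (k + p) := (Nat.le_add_right k p).trans Nat.lt_two_pow_self.le
      _ ≤ ∑ i : Fin p, 2 ^ thetaExponent p r t k i := by
        rw [← hlast]
        exact Finset.single_le_sum (f := fun i : Fin p => 2 ^ thetaExponent p r t k i)
          (fun _ _ => Nat.zero_le _) (Finset.mem_univ ⟨r - 1, by omega⟩)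
  · rw [sum_thetaWeight hr hrp]
    positivity

section MemTheta

variable {p : ℕ} {θ : Fin p → ℝ}

theorem MemTheta.nonneg (h : MemTheta θ) (i : Fin p) : 0 ≤ θ i := by
  obtain ⟨m, -, -, hlim⟩ := h
  exact ge_of_tendsto' (hlim i) fun k => by positivity

theorem MemTheta.antitone (h : MemTheta θ) : Antitone θ := by
  obtain ⟨m, hanti, -, hlim⟩ := h
  intro i j hij
  refine le_of_tendsto_of_tendsto' (hlim j) (hlim i) fun k => ?_
  gcongr
  · norm_num
  · exact (hanti k).antitone hij

theorem MemTheta.sum_eq_one (h : MemTheta θ) : ∑ i, θ i = 1 := by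
  obtain ⟨m, -, htop, hlim⟩ := h
  refine tendsto_nhds_unique (tendsto_finsetSum _ fun i _ => hlim i) (tendsto_const_nhds.congr' ?_)
  filter_upwards [htop.eventually_ge_atTop 1] with k hk
  have hS : (∑ j : Fin p, (2 : ℝ) ^ m k j) ≠ 0 := by
    exact_mod_cast (Nat.one_le_iff_ne_zero.mp hk)
  rw [← Finset.sum_div, div_self hS]

theorem exists_eventually_sub_eq_of_tendsto {m : ℕ → Fin p → ℕ}
    (hlim : ∀ i, Tendsto (fun k => (2 : ℝ) ^ m k i / ∑ j, (2 : ℝ) ^ m k j) atTop (𝓝 (θ i)))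
    {i j : Fin p} (hmono : ∀ k, m k j ≤ m k i) (hj : 0 < θ j) :
    ∃ a : ℕ, (∀ᶠ k in atTop, m k i - m k j = a) ∧ θ i = 2 ^ a * θ j := by
  have hratio : Tendsto (fun k => (2 : ℝ) ^ (m k i - m k j)) atTop (𝓝 (θ i / θ j)) := by
    refine ((hlim i).div (hlim j) hj.ne').congr fun k => ?_
    have hS : (∑ l, (2 : ℝ) ^ m k l) ≠ 0 :=
      (Finset.sum_pos (fun _ _ => by positivity) ⟨i, Finset.mem_univ _⟩).ne'
    rw [Pi.div_apply, div_div_div_cancel_right₀ hS, pow_sub₀ _ two_ne_zero (hmono k),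
      div_eq_mul_inv]
  obtain ⟨a, ha, heq⟩ := exists_eventually_eq_of_tendsto_comp isClosedEmbedding_two_pow hratio
  exact ⟨a, ha, by rw [← heq, div_mul_cancel₀ _ hj.ne']⟩

theorem MemTheta.exists_pos_iff_lt (h : MemTheta θ) :
    ∃ r : ℕ, 1 ≤ r ∧ r ≤ p ∧ ∀ i : Fin p, (i : ℕ) < r ↔ 0 < θ i := by
  refine ⟨_, ?_, (Finset.card_le_univ _).trans_eq (Fintype.card_fin p),
    Fin.lt_card_filter_iff_of_antitone fun i j hij hj => hj.trans_le (h.antitone hij)⟩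
  obtain ⟨i, -, hi⟩ : ∃ i ∈ Finset.univ, (0 : ℝ) < θ i :=
    Finset.exists_lt_of_sum_lt (by rw [h.sum_eq_one, Finset.sum_const_zero]; exact one_pos)
  exact Finset.card_pos.mpr ⟨i, Finset.mem_filter.mpr ⟨Finset.mem_univ i, hi⟩⟩

theorem MemTheta.exists_thetaWeight_div (h : MemTheta θ) :
    ∃ r : ℕ, 1 ≤ r ∧ r ≤ p ∧ ∃ t : Fin (r - 1) → ℕ, StrictAnti t ∧ (∀ i, 0 < t i) ∧
      ∀ i : Fin p, θ i = thetaWeight r t i / ∑ j : Fin p, thetaWeight r t j := by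
  have hsum := h.sum_eq_one
  obtain ⟨r, hr, hrp, hpos⟩ := h.exists_pos_iff_lt
  have hzero (i : Fin p) (hi : r ≤ i) : θ i = 0 :=
    le_antisymm (not_lt.mp fun hθ => by have := (hpos i).2 hθ; omega) (h.nonneg i)
  obtain ⟨last, hlast_val⟩ : ∃ l : Fin p, (l : ℕ) = r - 1 := ⟨⟨r - 1, by omega⟩, rfl⟩
  have hlast : 0 < θ last := (hpos last).1 (by omega)
  obtain ⟨m, hanti, -, hlim⟩ := h
  have hexp (j : Fin (r - 1)) : ∃ a : ℕ, (∀ᶠ k in atTop, m k ⟨j, by omega⟩ - m k last = a) ∧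
      θ ⟨j, by omega⟩ = 2 ^ a * θ last :=
    exists_eventually_sub_eq_of_tendsto hlim
      (fun k => (hanti k).antitone (Fin.le_def.mpr (by simp only; omega))) hlast
  choose t ht_ev ht_θ using hexp
  obtain ⟨k, hk⟩ := (eventually_all.mpr ht_ev).exists
  have hweight : ∀ i : Fin p, θ i = thetaWeight r t i * θ last := by
    intro i
    unfold thetaWeight
    split_ifs with h₁ h₂
    · exact ht_θ ⟨i, h₁⟩
    · rw [one_mul, show i = last from Fin.ext (h₂.trans hlast_val.symm)]
    · rw [zero_mul, hzero i (by omega)]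
  have hgap (j : Fin (r - 1)) : m k last < m k ⟨j, by omega⟩ :=
    hanti k (Fin.lt_def.mpr (by simp only; omega))
  refine ⟨r, hr, hrp, t, fun j j' hjj' => ?_, fun j => ?_, fun i => ?_⟩
  · have : m k ⟨j', by omega⟩ < m k ⟨j, by omega⟩ := hanti k (Fin.lt_def.mpr hjj')
    have := hgap j'
    rw [← hk j, ← hk j']
    omega
  · rw [← hk j]
    exact Nat.sub_pos_of_lt (hgap j)
  · have hnorm : (∑ j : Fin p, thetaWeight r t j) * θ last = 1 := by
      rw [Finset.sum_mul, ← hsum]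
      exact Finset.sum_congr rfl fun j _ => (hweight j).symm
    rw [hweight i, eq_div_iff (left_ne_zero_of_mul_eq_one hnorm), mul_assoc, mul_comm (θ last),
      hnorm, mul_one]

end MemTheta

theorem theta_characterization_general (p : ℕ) (θ : Fin p → ℝ) :
    MemTheta θ ↔
      ∃ r : ℕ, 1 ≤ r ∧ r ≤ p ∧
        ∃ t : Fin (r - 1) → ℕ, StrictAnti t ∧ (∀ i, 0 < t i) ∧
          ∀ i : Fin p,
            θ i = if h : (i : ℕ) < r - 1
              then (2 : ℝ) ^ (t ⟨(i : ℕ), h⟩) / ((∑ j : Fin (r - 1), (2 : ℝ) ^ (t j)) + 1)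
              else if (i : ℕ) = r - 1
                then 1 / ((∑ j : Fin (r - 1), (2 : ℝ) ^ (t j)) + 1)
                else 0 := by
  constructor
  · intro h
    obtain ⟨r, hr, hrp, t, ht, htpos, hθ⟩ := h.exists_thetaWeight_div
    refine ⟨r, hr, hrp, t, ht, htpos, fun i => ?_⟩
    rw [hθ i, sum_thetaWeight hr hrp, thetaWeight_div]
  · rintro ⟨r, hr, hrp, t, ht, htpos, hθ⟩
    have hθ' : θ = fun i : Fin p => thetaWeight r t i / ∑ j : Fin p, thetaWeight r t j :=
      funext fun i => by rw [hθ i, sum_thetaWeight hr hrp, thetaWeight_div]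
    exact hθ' ▸ memTheta_thetaWeight_div hr hrp ht htpos

theorem theta_characterization (p : ℕ) (hp : 1 ≤ p) (θ : Fin p → ℝ) :
    MemTheta θ ↔
      ∃ r : ℕ, 1 ≤ r ∧ r ≤ p ∧
        ∃ t : Fin (r - 1) → ℕ, StrictAnti t ∧ (∀ i, 0 < t i) ∧
          ∀ i : Fin p,
            θ i = if h : (i : ℕ) < r - 1
              then (2 : ℝ) ^ (t ⟨(i : ℕ), h⟩) / ((∑ j : Fin (r - 1), (2 : ℝ) ^ (t j)) + 1)
              else if (i : ℕ) = r - 1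
                then 1 / ((∑ j : Fin (r - 1), (2 : ℝ) ^ (t j)) + 1)
                else 0 :=
  theta_characterization_general p θ
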